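/- Every convex preorder ≽ on the positive roots of affine type A_{e-1}^{(1)} realizes a unique residue permutation θ: there is exactly one permutation θ = (θ_1,…,θ_e) of [0,e−1] such that Φ_{≻δ} = {kδ + γ^θ_{[a,b]} : 1 ≤ a ≤ b ≤ e−1, k ∈ ℤ} ∩ Φ₊ and Φ_{≺δ} = {kδ − γ^θ_{[a,b]} : 1 ≤ a ≤ b ≤ e−1, k ∈ ℤ} ∩ Φ₊. -/

import Mathlib

/-- The positive root `α(t,L) = α_{t̄} + ⋯ + α_{t̄+L-1}` of affine type `A_{e-1}^{(1)}`,
as an element of the root lattice `ZMod e → ℤ`. -/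
def alphaRoot (e : ℕ) (t : ℤ) (L : ℕ) : ZMod e → ℤ := fun j =>
  (((Finset.range L).filter (fun k : ℕ => ((t + (k : ℤ) : ℤ) : ZMod e) = j)).card : ℤ)

/-- The null root `δ = α_0 + α_1 + ⋯ + α_{e-1}`. -/
def deltaRoot (e : ℕ) : ZMod e → ℤ := fun _ => 1

/-- The set `Φ₊` of positive roots of affine type `A_{e-1}^{(1)}`. -/
def PhiPos (e : ℕ) : Set (ZMod e → ℤ) :=
  {β | ∃ t : ℤ, ∃ L : ℕ, 0 < L ∧ β = alphaRoot e t L}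

/-- Imaginary roots: positive multiples of the null root `δ`. -/
def ImaginaryRoot (e : ℕ) (β : ZMod e → ℤ) : Prop :=
  ∃ m : ℕ, 0 < m ∧ β = fun _ => (m : ℤ)

/-- A convex preorder on `Φ₊`: reflexive, transitive, total, convex, and with mutual
comparability exactly for equal or both-imaginary roots. -/
structure ConvexPreorderOn (e : ℕ) where
  rel : (ZMod e → ℤ) → (ZMod e → ℤ) → Prop
  refl : ∀ β ∈ PhiPos e, rel β β
  trans : ∀ β γ ν, β ∈ PhiPos e → γ ∈ PhiPos e → ν ∈ PhiPos e →
    rel β γ → rel γ ν → rel β ν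
  total : ∀ β γ, β ∈ PhiPos e → γ ∈ PhiPos e → rel β γ ∨ rel γ β
  convex : ∀ β γ, β ∈ PhiPos e → γ ∈ PhiPos e → rel β γ → β + γ ∈ PhiPos e →
    rel β (β + γ) ∧ rel (β + γ) γ
  imag_equiv : ∀ β γ, β ∈ PhiPos e → γ ∈ PhiPos e →
    ((rel β γ ∧ rel γ β) ↔ (β = γ ∨ (ImaginaryRoot e β ∧ ImaginaryRoot e γ)))

/-- The strict relation `β ≻ γ` associated to a convex preorder. -/
def GtRel {e : ℕ} (P : ConvexPreorderOn e) (β γ : ZMod e → ℤ) : Prop :=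
  P.rel β γ ∧ ¬ P.rel γ β

/-- `γ^θ_t := α(θ_t + 1, (θ_{t+1} − θ_t) mod e)` for a residue permutation `θ`
(a bijection from the index set `[1,e]` onto the residues `[0,e−1]`). -/
def gammaTheta (e : ℕ) (θ : ℕ → ℕ) (t : ℕ) : ZMod e → ℤ :=
  alphaRoot e ((θ t : ℤ) + 1) ((θ (t + 1) + e - θ t) % e)

/-- `γ^θ_{[a,b]} := γ^θ_a + γ^θ_{a+1} + ⋯ + γ^θ_b`. -/
def gammaInt (e : ℕ) (θ : ℕ → ℕ) (a b : ℕ) : ZMod e → ℤ :=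
  ∑ t ∈ Finset.Icc a b, gammaTheta e θ t

/-- The convex preorder `P` realizes the residue permutation `θ`:
`Φ_{≻δ} = {kδ + γ^θ_{[a,b]}} ∩ Φ₊` and `Φ_{≺δ} = {kδ − γ^θ_{[a,b]}} ∩ Φ₊`. -/
def Realizes (e : ℕ) (P : ConvexPreorderOn e) (θ : ℕ → ℕ) : Prop :=
  ({β | β ∈ PhiPos e ∧ GtRel P β (deltaRoot e)} =
    {β | β ∈ PhiPos e ∧ ∃ a b : ℕ, ∃ k : ℤ, 1 ≤ a ∧ a ≤ b ∧ b ≤ e - 1 ∧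
      β = k • deltaRoot e + gammaInt e θ a b}) ∧
  ({β | β ∈ PhiPos e ∧ GtRel P (deltaRoot e) β} =
    {β | β ∈ PhiPos e ∧ ∃ a b : ℕ, ∃ k : ℤ, 1 ≤ a ∧ a ≤ b ∧ b ≤ e - 1 ∧
      β = k • deltaRoot e - gammaInt e θ a b})

/-!
Every real positive root is `β_{ij} + kδ` with `β_{ij} = α_{i+1} + ⋯ + α_j` for distinct residues
`i, j` and `k ≥ 0`. Convexity shows that whether such a root lies above or below `δ` does not
depend on `k` (compare `β` and `β + δ` with `δ`), and that `i ⊲ j :↔ β_{ij} ≻ δ` is a strict total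
order on the residues: `β_{ij} + β_{ji} = δ` gives trichotomy and `β_{ij} + β_{jk} ∈ β_{ik} + ℕδ`
gives transitivity. Since `γ^θ_{[a,b]} ∈ β_{θ_a θ_{b+1}} + ℤδ`, the preorder realizes `θ` exactly
when `θ` lists the residues in `⊲`-increasing order, and there is exactly one such listing.
-/

section RelOrder

variable {α : Type*} {r : α → α → Prop} [IsStrictTotalOrder α r]

theorem eqOn_of_image_eq_of_rel {β : Type*} [LinearOrder β] [WellFoundedLT β] {s : Set β}
    {f g : β → α} (hf : ∀ a ∈ s, ∀ b ∈ s, a < b → r (f a) (f b))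
    (hg : ∀ a ∈ s, ∀ b ∈ s, a < b → r (g a) (g b)) (h : f '' s = g '' s) : s.EqOn f g := by
  classical
  let := linearOrderOfSTO r
  have hf' : StrictMono (s.domRestrict f) := fun a b hab => hf a a.2 b b.2 hab
  have hg' : StrictMono (s.domRestrict g) := fun a b hab => hg a a.2 b b.2 hab
  have hfg := (hf'.range_inj hg').1 (by simpa only [Set.range_domRestrict] using h)
  exact fun x hx => congrFun hfg ⟨x, hx⟩

variable (r) in
theorem exists_bijOn_Icc_of_rel [Fintype α] [Nonempty α] :
    ∃ f : ℕ → α, Set.BijOn f (Set.Icc 1 (Fintype.card α)) Set.univ ∧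
      ∀ a ∈ Set.Icc 1 (Fintype.card α), ∀ b ∈ Set.Icc 1 (Fintype.card α), a < b →
        r (f a) (f b) := by
  classical
  let := linearOrderOfSTO r
  set n := Fintype.card α
  have : NeZero n := ⟨Fintype.card_ne_zero⟩
  let g := Fintype.orderIsoFinOfCardEq α (rfl : n = n)
  have hval {t : ℕ} (h₁ : 1 ≤ t) (h₂ : t ≤ n) : (Fin.ofNat n (t - 1) : ℕ) = t - 1 :=
    Nat.mod_eq_of_lt (by omega)
  refine ⟨fun t => g (Fin.ofNat n (t - 1)), ⟨Set.mapsTo_univ _ _, ?_, ?_⟩, ?_⟩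
  · rintro a ⟨ha₁, ha₂⟩ b ⟨hb₁, hb₂⟩ hab
    have := congrArg Fin.val (g.injective hab)
    rw [hval ha₁ ha₂, hval hb₁ hb₂] at this
    omega
  · intro x _
    refine ⟨(g.symm x : ℕ) + 1, ⟨by omega, (g.symm x).isLt⟩, ?_⟩
    simp
  · rintro a ⟨ha₁, ha₂⟩ b ⟨hb₁, hb₂⟩ hab
    exact g.strictMono (Fin.lt_def.2 (by rw [hval ha₁ ha₂, hval hb₁ hb₂]; omega))

end RelOrder

open Finset

variable {e : ℕ}

@[simp]
theorem deltaRoot_apply (j : ZMod e) : deltaRoot e j = 1 :=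
  rfl

theorem imaginaryRoot_deltaRoot : ImaginaryRoot e (deltaRoot e) :=
  ⟨1, one_pos, rfl⟩

theorem alphaRoot_zero (t : ℤ) : alphaRoot e t 0 = 0 := by
  ext; simp [alphaRoot]

theorem alphaRoot_nonneg (t : ℤ) (L : ℕ) (j : ZMod e) : 0 ≤ alphaRoot e t L j :=
  Int.natCast_nonneg _

theorem alphaRoot_add (t : ℤ) (L M : ℕ) :
    alphaRoot e t (L + M) = alphaRoot e t L + alphaRoot e (t + L) M := by
  ext j
  simp only [alphaRoot, Pi.add_apply]
  rw [range_add, filter_union, card_union_of_disjoint, filter_map, card_map, Nat.cast_add]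
  · congr 3
    ext k
    simp [add_assoc]
  · refine disjoint_filter_filter (disjoint_left.2 ?_)
    simp only [mem_range, mem_map, addLeftEmbedding_apply]
    omega

theorem alphaRoot_congr {t t' : ℤ} (h : (t : ZMod e) = t') (L : ℕ) :
    alphaRoot e t L = alphaRoot e t' L := by
  ext j
  simp [alphaRoot, h]

/-- `β_{ij} = α_{i+1} + ⋯ + α_j`, the real root of the cyclic interval `(i, j]` of residues. -/
def intervalRoot (e : ℕ) (i j : ZMod e) : ZMod e → ℤ :=
  alphaRoot e ((i.val : ℤ) + 1) (j - i).val

theorem gammaTheta_eq_intervalRoot {θ : ℕ → ℕ} {t : ℕ} (h : θ t < e) :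
    gammaTheta e θ t = intervalRoot e (θ t) (θ (t + 1)) := by
  rw [gammaTheta, intervalRoot, ZMod.val_cast_of_lt h, ← ZMod.val_natCast, Nat.cast_sub (by omega)]
  push_cast
  simp

section Roots

variable [NeZero e]

theorem alphaRoot_eq_deltaRoot (t : ℤ) : alphaRoot e t e = deltaRoot e := by
  ext j
  simp only [alphaRoot, deltaRoot, Nat.cast_eq_one, card_eq_one]
  refine ⟨(j - t).val, ext fun k => ?_⟩
  simp only [mem_filter, mem_range, mem_singleton]
  constructor
  · rintro ⟨hk, rfl⟩
    simp [ZMod.val_cast_of_lt hk]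
  · rintro rfl
    simp [ZMod.val_lt]

theorem alphaRoot_add_mul (t : ℤ) (L q : ℕ) :
    alphaRoot e t (L + q * e) = alphaRoot e t L + (q : ℤ) • deltaRoot e := by
  induction q with
  | zero => simp
  | succ q ih =>
    rw [add_mul, one_mul, ← add_assoc, alphaRoot_add, ih, alphaRoot_eq_deltaRoot]
    push_cast
    rw [add_smul, one_smul, add_assoc]

theorem sum_alphaRoot (t : ℤ) (L : ℕ) : ∑ j : ZMod e, alphaRoot e t L j = L := by
  simp only [alphaRoot]
  rw [← Nat.cast_sum, ← card_eq_sum_card_fiberwise (fun _ _ => mem_univ _), card_range]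

theorem deltaRoot_mem : deltaRoot e ∈ PhiPos e :=
  ⟨0, e, Nat.pos_of_neZero e, (alphaRoot_eq_deltaRoot 0).symm⟩

theorem intervalRoot_add_intervalRoot_eq_alphaRoot (i j k : ZMod e) :
    intervalRoot e i j + intervalRoot e j k =
      alphaRoot e ((i.val : ℤ) + 1) ((j - i).val + (k - j).val) := by
  rw [alphaRoot_add, intervalRoot, intervalRoot, alphaRoot_congr (t := (j.val : ℤ) + 1)]
  push_cast
  simp only [ZMod.natCast_zmod_val]
  ring

theorem intervalRoot_add_intervalRoot (i j k : ZMod e) :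
    ∃ w : ℕ, intervalRoot e i j + intervalRoot e j k =
      intervalRoot e i k + (w : ℤ) • deltaRoot e := by
  have hval : (k - i).val = ((j - i).val + (k - j).val) % e := by
    rw [← ZMod.val_add, sub_add_sub_cancel']
  refine ⟨((j - i).val + (k - j).val) / e, ?_⟩
  rw [intervalRoot_add_intervalRoot_eq_alphaRoot, intervalRoot, hval, ← alphaRoot_add_mul,
    Nat.mod_add_div']

theorem intervalRoot_add_intervalRoot_swap {i j : ZMod e} (h : i ≠ j) :
    intervalRoot e i j + intervalRoot e j i = deltaRoot e := by
  have hval : (j - i).val + (i - j).val = e := by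
    rw [show i - j = -(j - i) by ring, ZMod.neg_val, if_neg (sub_ne_zero.2 h.symm)]
    have := ZMod.val_lt (j - i)
    omega
  rw [intervalRoot_add_intervalRoot_eq_alphaRoot, hval, alphaRoot_eq_deltaRoot]

theorem intervalRoot_apply_left (i j : ZMod e) : intervalRoot e i j i = 0 := by
  simp only [intervalRoot, alphaRoot, Nat.cast_eq_zero, card_eq_zero, filter_eq_empty_iff,
    mem_range]
  intro k hk hki
  have hdvd : e ∣ k + 1 := by
    rw [← ZMod.natCast_eq_zero_iff]
    push_cast at hki ⊢
    rw [ZMod.natCast_zmod_val] at hki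
    linear_combination hki
  have := Nat.le_of_dvd k.succ_pos hdvd
  have := ZMod.val_lt (j - i)
  omega

theorem sum_intervalRoot (i j : ZMod e) : ∑ r : ZMod e, intervalRoot e i j r = (j - i).val :=
  sum_alphaRoot _ _

theorem intervalRoot_add_smul_mem {i j : ZMod e} (h : i ≠ j) (k : ℕ) :
    intervalRoot e i j + (k : ℤ) • deltaRoot e ∈ PhiPos e := by
  refine ⟨(i.val : ℤ) + 1, (j - i).val + k * e, ?_, (alphaRoot_add_mul _ _ _).symm⟩
  have : (j - i).val ≠ 0 := by simpa [sub_eq_zero] using h.symm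
  omega

theorem intervalRoot_mem {i j : ZMod e} (h : i ≠ j) : intervalRoot e i j ∈ PhiPos e := by
  simpa using intervalRoot_add_smul_mem h 0

theorem nonneg_of_intervalRoot_add_smul_mem {i j : ZMod e} {k : ℤ}
    (h : intervalRoot e i j + k • deltaRoot e ∈ PhiPos e) : 0 ≤ k := by
  obtain ⟨t, L, -, hβ⟩ := h
  simpa [intervalRoot_apply_left, ← hβ] using alphaRoot_nonneg t L i

theorem not_imaginaryRoot_intervalRoot_add_smul {i j : ZMod e} (h : i ≠ j) (k : ℤ) :
    ¬ ImaginaryRoot e (intervalRoot e i j + k • deltaRoot e) := by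
  rintro ⟨m, -, hm⟩
  have hβ : intervalRoot e i j = 0 := by
    ext r
    have hi := congrFun hm i
    have hr := congrFun hm r
    simp only [Pi.add_apply, Pi.smul_apply, deltaRoot_apply, smul_eq_mul, mul_one,
      intervalRoot_apply_left] at hi hr
    simp only [Pi.zero_apply]
    omega
  have := sum_intervalRoot i j
  simp only [hβ, Pi.zero_apply, sum_const_zero] at this
  exact h (sub_eq_zero.1 ((ZMod.val_eq_zero _).1 (by exact_mod_cast this.symm))).symm

theorem not_imaginaryRoot_intervalRoot {i j : ZMod e} (h : i ≠ j) :
    ¬ ImaginaryRoot e (intervalRoot e i j) := by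
  simpa using not_imaginaryRoot_intervalRoot_add_smul h 0

theorem exists_intervalRoot_of_not_imaginaryRoot {β : ZMod e → ℤ} (hβ : β ∈ PhiPos e)
    (hre : ¬ ImaginaryRoot e β) :
    ∃ i j : ZMod e, ∃ k : ℕ, i ≠ j ∧ β = intervalRoot e i j + (k : ℤ) • deltaRoot e := by
  obtain ⟨t, L, hL, rfl⟩ := hβ
  rw [← Nat.mod_add_div' L e, alphaRoot_add_mul] at hre ⊢
  set r := L % e with hr
  have hr₀ : r ≠ 0 := by
    rintro h0
    refine hre ⟨L / e, ?_, ?_⟩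
    · by_contra! hq
      have : L = 0 := by rw [← Nat.mod_add_div' L e, ← hr, h0, Nat.le_zero.1 hq]; simp
      omega
    · ext; simp [h0, alphaRoot_zero]
  have hrv : ((r : ZMod e)).val = r := ZMod.val_cast_of_lt (Nat.mod_lt _ (Nat.pos_of_neZero e))
  refine ⟨(t : ZMod e) - 1, (t : ZMod e) - 1 + r, L / e, ?_, ?_⟩
  · intro h
    apply hr₀
    rw [← hrv, ← ZMod.val_zero (n := e)]
    congr 1
    linear_combination -h
  · rw [intervalRoot, add_sub_cancel_left, hrv, alphaRoot_congr (t := t)]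
    simp

theorem gammaInt_eq_intervalRoot_add_smul {θ : ℕ → ℕ} {a b : ℕ} (hab : a ≤ b)
    (hθ : ∀ t ∈ Set.Icc a b, θ t < e) :
    ∃ w : ℕ, gammaInt e θ a b = intervalRoot e (θ a) (θ (b + 1)) + (w : ℤ) • deltaRoot e := by
  induction b, hab using Nat.le_induction with
  | base => exact ⟨0, by simp [gammaInt, gammaTheta_eq_intervalRoot (hθ a ⟨le_rfl, le_rfl⟩)]⟩
  | succ b hab ih =>
    obtain ⟨w, hw⟩ := ih fun t ht => hθ t ⟨ht.1, ht.2.trans b.le_succ⟩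
    obtain ⟨w', hw'⟩ := intervalRoot_add_intervalRoot (θ a : ZMod e) (θ (b + 1)) (θ (b + 2))
    refine ⟨w + w', ?_⟩
    rw [gammaInt, sum_Icc_succ_top (by omega), ← gammaInt, hw,
      gammaTheta_eq_intervalRoot (hθ _ ⟨by omega, le_rfl⟩), add_right_comm, hw']
    push_cast
    rw [add_smul]
    abel

theorem gammaInt_sub_one_eq_intervalRoot_add_smul {θ : ℕ → ℕ}
    (hθ : Set.MapsTo θ (Set.Icc 1 e) (Set.Iio e)) {s t : ℕ} (hs : 1 ≤ s) (hst : s < t)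
    (ht : t ≤ e) :
    ∃ w : ℕ, gammaInt e θ s (t - 1) = intervalRoot e (θ s) (θ t) + (w : ℤ) • deltaRoot e := by
  have := gammaInt_eq_intervalRoot_add_smul (θ := θ) (a := s) (b := t - 1) (by omega)
    fun u ⟨hu₁, hu₂⟩ => hθ ⟨by omega, by omega⟩
  rwa [Nat.sub_add_cancel (by omega)] at this

theorem bijOn_val_univ_Iio : Set.BijOn ZMod.val (Set.univ : Set (ZMod e)) (Set.Iio e) :=
  ⟨fun x _ => ZMod.val_lt x, (ZMod.val_injective e).injOn,
    fun n hn => ⟨n, trivial, ZMod.val_cast_of_lt hn⟩⟩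

theorem bijOn_natCast_Iio_univ : Set.BijOn (Nat.cast : ℕ → ZMod e) (Set.Iio e) Set.univ :=
  ⟨Set.mapsTo_univ _ _,
    fun a ha b hb h => by rw [← ZMod.val_cast_of_lt ha, h, ZMod.val_cast_of_lt hb],
    fun x _ => ⟨x.val, ZMod.val_lt x, ZMod.natCast_zmod_val x⟩⟩

end Roots

namespace ConvexPreorderOn

theorem add_between (P : ConvexPreorderOn e) {β γ : ZMod e → ℤ} (hβ : β ∈ PhiPos e)
    (hγ : γ ∈ PhiPos e) (hs : β + γ ∈ PhiPos e) :
    (P.rel β (β + γ) ∧ P.rel (β + γ) γ) ∨ (P.rel γ (β + γ) ∧ P.rel (β + γ) β) := by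
  rcases P.total β γ hβ hγ with h | h
  · exact .inl (P.convex β γ hβ hγ h hs)
  · rw [add_comm] at hs ⊢
    exact .inr (P.convex γ β hγ hβ h hs)

def ResidueLT (P : ConvexPreorderOn e) (i j : ZMod e) : Prop :=
  i ≠ j ∧ GtRel P (intervalRoot e i j) (deltaRoot e)

def IsResidueSorting (P : ConvexPreorderOn e) (θ : ℕ → ℕ) : Prop :=
  Set.BijOn θ (Set.Icc 1 e) (Set.Iio e) ∧
    ∀ s ∈ Set.Icc 1 e, ∀ t ∈ Set.Icc 1 e, s < t → P.ResidueLT (θ s) (θ t)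

variable [NeZero e] {P : ConvexPreorderOn e}

section AboveBelowDelta

variable {β γ : ZMod e → ℤ}

theorem not_rel_deltaRoot_and_rel (hβ : β ∈ PhiPos e) (hre : ¬ ImaginaryRoot e β) :
    ¬ (P.rel β (deltaRoot e) ∧ P.rel (deltaRoot e) β) := by
  intro h
  rcases (P.imag_equiv _ _ hβ deltaRoot_mem).1 h with rfl | ⟨him, -⟩
  exacts [hre imaginaryRoot_deltaRoot, hre him]

theorem gtRel_deltaRoot_iff_rel (hβ : β ∈ PhiPos e) (hre : ¬ ImaginaryRoot e β) :
    GtRel P β (deltaRoot e) ↔ P.rel β (deltaRoot e) :=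
  ⟨And.left, fun h => ⟨h, fun h' => not_rel_deltaRoot_and_rel hβ hre ⟨h, h'⟩⟩⟩

theorem deltaRoot_gtRel_iff_not (hβ : β ∈ PhiPos e) (hre : ¬ ImaginaryRoot e β) :
    GtRel P (deltaRoot e) β ↔ ¬ GtRel P β (deltaRoot e) := by
  rw [gtRel_deltaRoot_iff_rel hβ hre]
  refine ⟨fun h h' => not_rel_deltaRoot_and_rel hβ hre ⟨h', h.1⟩, fun h => ⟨?_, h⟩⟩
  exact (P.total _ _ hβ deltaRoot_mem).resolve_left h

theorem gtRel_deltaRoot_add_deltaRoot_iff (hβ : β ∈ PhiPos e) (hre : ¬ ImaginaryRoot e β)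
    (hβδ : β + deltaRoot e ∈ PhiPos e) (hreδ : ¬ ImaginaryRoot e (β + deltaRoot e)) :
    GtRel P (β + deltaRoot e) (deltaRoot e) ↔ GtRel P β (deltaRoot e) := by
  rw [gtRel_deltaRoot_iff_rel hβδ hreδ, gtRel_deltaRoot_iff_rel hβ hre]
  rcases P.add_between hβ deltaRoot_mem hβδ with ⟨h₁, h₂⟩ | ⟨h₁, h₂⟩
  · exact ⟨fun _ => P.trans _ _ _ hβ hβδ deltaRoot_mem h₁ h₂, fun _ => h₂⟩
  · refine ⟨fun h => (not_rel_deltaRoot_and_rel hβδ hreδ ⟨h, h₁⟩).elim, fun h => ?_⟩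
    exact (not_rel_deltaRoot_and_rel hβ hre ⟨h, P.trans _ _ _ deltaRoot_mem hβδ hβ h₁ h₂⟩).elim

theorem gtRel_deltaRoot_add (hβ : β ∈ PhiPos e) (hγ : γ ∈ PhiPos e) (hs : β + γ ∈ PhiPos e)
    (hre : ¬ ImaginaryRoot e (β + γ)) (hβδ : GtRel P β (deltaRoot e))
    (hγδ : GtRel P γ (deltaRoot e)) : GtRel P (β + γ) (deltaRoot e) := by
  rw [gtRel_deltaRoot_iff_rel hs hre]
  rcases P.add_between hβ hγ hs with ⟨-, h⟩ | ⟨-, h⟩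
  exacts [P.trans _ _ _ hs hγ deltaRoot_mem h hγδ.1, P.trans _ _ _ hs hβ deltaRoot_mem h hβδ.1]

theorem not_gtRel_deltaRoot_of_add_eq (hβ : β ∈ PhiPos e) (hγ : γ ∈ PhiPos e)
    (hsum : β + γ = deltaRoot e) : ¬ (GtRel P β (deltaRoot e) ∧ GtRel P γ (deltaRoot e)) := by
  rintro ⟨hβδ, hγδ⟩
  rcases P.add_between hβ hγ (hsum ▸ deltaRoot_mem) with ⟨-, h⟩ | ⟨-, h⟩ <;> rw [hsum] at h
  exacts [hγδ.2 h, hβδ.2 h]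

theorem not_deltaRoot_gtRel_of_add_eq (hβ : β ∈ PhiPos e) (hγ : γ ∈ PhiPos e)
    (hsum : β + γ = deltaRoot e) : ¬ (GtRel P (deltaRoot e) β ∧ GtRel P (deltaRoot e) γ) := by
  rintro ⟨hβδ, hγδ⟩
  rcases P.add_between hβ hγ (hsum ▸ deltaRoot_mem) with ⟨h, -⟩ | ⟨h, -⟩ <;> rw [hsum] at h
  exacts [hβδ.2 h, hγδ.2 h]

end AboveBelowDelta

section ResidueOrder

variable {i j k : ZMod e}

theorem gtRel_intervalRoot_add_smul_iff (h : i ≠ j) (k : ℕ) :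
    GtRel P (intervalRoot e i j + (k : ℤ) • deltaRoot e) (deltaRoot e) ↔ P.ResidueLT i j := by
  induction k with
  | zero => simp [ResidueLT, h]
  | succ k ih =>
    have hsucc : intervalRoot e i j + ((k + 1 : ℕ) : ℤ) • deltaRoot e =
        intervalRoot e i j + (k : ℤ) • deltaRoot e + deltaRoot e := by
      rw [Nat.cast_succ, add_smul, one_smul, add_assoc]
    rw [← ih, hsucc]
    exact gtRel_deltaRoot_add_deltaRoot_iff (intervalRoot_add_smul_mem h k)
      (not_imaginaryRoot_intervalRoot_add_smul h k) (hsucc ▸ intervalRoot_add_smul_mem h (k + 1))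
      (hsucc ▸ not_imaginaryRoot_intervalRoot_add_smul h _)

theorem ResidueLT.asymm (hij : P.ResidueLT i j) : ¬ P.ResidueLT j i := fun hji =>
  not_gtRel_deltaRoot_of_add_eq (intervalRoot_mem hij.1) (intervalRoot_mem hji.1)
    (intervalRoot_add_intervalRoot_swap hij.1) ⟨hij.2, hji.2⟩

theorem residueLT_or_residueLT (h : i ≠ j) : P.ResidueLT i j ∨ P.ResidueLT j i := by
  by_contra! hn
  refine not_deltaRoot_gtRel_of_add_eq (P := P) (intervalRoot_mem h) (intervalRoot_mem h.symm)
    (intervalRoot_add_intervalRoot_swap h) ⟨?_, ?_⟩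
  · exact (deltaRoot_gtRel_iff_not (intervalRoot_mem h) (not_imaginaryRoot_intervalRoot h)).2
      fun h' => hn.1 ⟨h, h'⟩
  · exact (deltaRoot_gtRel_iff_not (intervalRoot_mem h.symm)
      (not_imaginaryRoot_intervalRoot h.symm)).2 fun h' => hn.2 ⟨h.symm, h'⟩

theorem ResidueLT.trans (hij : P.ResidueLT i j) (hjk : P.ResidueLT j k) : P.ResidueLT i k := by
  have hik : i ≠ k := by
    rintro rfl
    exact hij.asymm hjk
  obtain ⟨w, hw⟩ := intervalRoot_add_intervalRoot i j k
  have hsum := gtRel_deltaRoot_add (intervalRoot_mem hij.1) (intervalRoot_mem hjk.1)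
    (hw ▸ intervalRoot_add_smul_mem hik w) (hw ▸ not_imaginaryRoot_intervalRoot_add_smul hik w)
    hij.2 hjk.2
  rwa [hw, gtRel_intervalRoot_add_smul_iff hik] at hsum

instance : IsStrictTotalOrder (ZMod e) P.ResidueLT where
  irrefl _ h := h.1 rfl
  trans _ _ _ := ResidueLT.trans
  trichotomous i j hij hji := by
    by_contra h
    exact (residueLT_or_residueLT h).elim hij hji

theorem deltaRoot_gtRel_intervalRoot_add_smul_iff (h : i ≠ j) (k : ℕ) :
    GtRel P (deltaRoot e) (intervalRoot e i j + (k : ℤ) • deltaRoot e) ↔ P.ResidueLT j i := by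
  rw [deltaRoot_gtRel_iff_not (intervalRoot_add_smul_mem h k)
    (not_imaginaryRoot_intervalRoot_add_smul h k), gtRel_intervalRoot_add_smul_iff h]
  exact ⟨(residueLT_or_residueLT h).resolve_left, ResidueLT.asymm⟩

theorem gtRel_deltaRoot_iff_exists {β : ZMod e → ℤ} (hβ : β ∈ PhiPos e) :
    GtRel P β (deltaRoot e) ↔
      ∃ i j : ZMod e, ∃ k : ℤ, P.ResidueLT i j ∧ β = intervalRoot e i j + k • deltaRoot e := by
  constructor
  · intro hgt
    have hre : ¬ ImaginaryRoot e β := fun him =>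
      hgt.2 ((P.imag_equiv _ _ hβ deltaRoot_mem).2 (.inr ⟨him, imaginaryRoot_deltaRoot⟩)).2
    obtain ⟨i, j, k, hij, rfl⟩ := exists_intervalRoot_of_not_imaginaryRoot hβ hre
    exact ⟨i, j, k, (gtRel_intervalRoot_add_smul_iff hij k).1 hgt, rfl⟩
  · rintro ⟨i, j, k, hij, rfl⟩
    lift k to ℕ using nonneg_of_intervalRoot_add_smul_mem hβ
    exact (gtRel_intervalRoot_add_smul_iff hij.1 k).2 hij

theorem deltaRoot_gtRel_iff_exists {β : ZMod e → ℤ} (hβ : β ∈ PhiPos e) :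
    GtRel P (deltaRoot e) β ↔
      ∃ i j : ZMod e, ∃ k : ℤ, P.ResidueLT i j ∧ β = intervalRoot e j i + k • deltaRoot e := by
  constructor
  · intro hgt
    have hre : ¬ ImaginaryRoot e β := fun him =>
      hgt.2 ((P.imag_equiv _ _ hβ deltaRoot_mem).2 (.inr ⟨him, imaginaryRoot_deltaRoot⟩)).1
    obtain ⟨j, i, k, hji, rfl⟩ := exists_intervalRoot_of_not_imaginaryRoot hβ hre
    exact ⟨i, j, k, (deltaRoot_gtRel_intervalRoot_add_smul_iff hji k).1 hgt, rfl⟩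
  · rintro ⟨i, j, k, hij, rfl⟩
    lift k to ℕ using nonneg_of_intervalRoot_add_smul_mem hβ
    exact (deltaRoot_gtRel_intervalRoot_add_smul_iff hij.1.symm k).2 hij

end ResidueOrder

namespace IsResidueSorting

variable {θ : ℕ → ℕ}

theorem residueLT_iff (hθ : P.IsResidueSorting θ) {i j : ZMod e} :
    P.ResidueLT i j ↔
      ∃ s t : ℕ, 1 ≤ s ∧ s < t ∧ t ≤ e ∧ (θ s : ZMod e) = i ∧ (θ t : ZMod e) = j := by
  have hbij := bijOn_natCast_Iio_univ.comp hθ.1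
  constructor
  · intro hij
    obtain ⟨s, hs, rfl⟩ := hbij.surjOn (Set.mem_univ i)
    obtain ⟨t, ht, rfl⟩ := hbij.surjOn (Set.mem_univ j)
    refine ⟨s, t, hs.1, ?_, ht.2, rfl, rfl⟩
    rcases lt_trichotomy s t with hst | rfl | hts
    exacts [hst, (hij.1 rfl).elim, (hij.asymm (hθ.2 t ht s hs hts)).elim]
  · rintro ⟨s, t, hs, hst, ht, rfl, rfl⟩
    exact hθ.2 s ⟨hs, by omega⟩ t ⟨by omega, ht⟩ hst

theorem exists_add_gammaInt_iff (hθ : P.IsResidueSorting θ) {β : ZMod e → ℤ} :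
    (∃ i j : ZMod e, ∃ k : ℤ, P.ResidueLT i j ∧ β = intervalRoot e i j + k • deltaRoot e) ↔
      ∃ a b : ℕ, ∃ k : ℤ, 1 ≤ a ∧ a ≤ b ∧ b ≤ e - 1 ∧ β = k • deltaRoot e + gammaInt e θ a b := by
  constructor
  · rintro ⟨i, j, k, hij, rfl⟩
    obtain ⟨s, t, hs, hst, ht, rfl, rfl⟩ := hθ.residueLT_iff.1 hij
    obtain ⟨w, hw⟩ := gammaInt_sub_one_eq_intervalRoot_add_smul hθ.1.mapsTo hs hst ht
    refine ⟨s, t - 1, k - w, hs, by omega, by omega, ?_⟩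
    rw [hw, sub_smul]
    abel
  · rintro ⟨a, b, k, ha, hab, hb, rfl⟩
    obtain ⟨w, hw⟩ := gammaInt_eq_intervalRoot_add_smul (θ := θ) hab
      fun u ⟨hu₁, hu₂⟩ => hθ.1.mapsTo ⟨by omega, by omega⟩
    have hij := hθ.residueLT_iff.2 ⟨a, b + 1, ha, by omega, by omega, rfl, rfl⟩
    refine ⟨θ a, θ (b + 1), k + w, hij, ?_⟩
    rw [hw, add_smul]
    abel

theorem exists_sub_gammaInt_iff (hθ : P.IsResidueSorting θ) {β : ZMod e → ℤ} :
    (∃ i j : ZMod e, ∃ k : ℤ, P.ResidueLT i j ∧ β = intervalRoot e j i + k • deltaRoot e) ↔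
      ∃ a b : ℕ, ∃ k : ℤ, 1 ≤ a ∧ a ≤ b ∧ b ≤ e - 1 ∧ β = k • deltaRoot e - gammaInt e θ a b := by
  constructor
  · rintro ⟨i, j, k, hij, rfl⟩
    obtain ⟨s, t, hs, hst, ht, rfl, rfl⟩ := hθ.residueLT_iff.1 hij
    obtain ⟨w, hw⟩ := gammaInt_sub_one_eq_intervalRoot_add_smul hθ.1.mapsTo hs hst ht
    refine ⟨s, t - 1, k + 1 + w, hs, by omega, by omega, ?_⟩
    rw [hw]
    linear_combination (norm := module) intervalRoot_add_intervalRoot_swap hij.1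
  · rintro ⟨a, b, k, ha, hab, hb, rfl⟩
    obtain ⟨w, hw⟩ := gammaInt_eq_intervalRoot_add_smul (θ := θ) hab
      fun u ⟨hu₁, hu₂⟩ => hθ.1.mapsTo ⟨by omega, by omega⟩
    have hij := hθ.residueLT_iff.2 ⟨a, b + 1, ha, by omega, by omega, rfl, rfl⟩
    refine ⟨θ a, θ (b + 1), k - 1 - w, hij, ?_⟩
    rw [hw]
    linear_combination (norm := module) -intervalRoot_add_intervalRoot_swap hij.1

theorem realizes (hθ : P.IsResidueSorting θ) : Realizes e P θ := by
  constructor <;> ext β <;> refine and_congr_right fun hβ => ?_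
  · rw [gtRel_deltaRoot_iff_exists hβ, hθ.exists_add_gammaInt_iff]
  · rw [deltaRoot_gtRel_iff_exists hβ, hθ.exists_sub_gammaInt_iff]

theorem eqOn {θ' : ℕ → ℕ} (hθ : P.IsResidueSorting θ) (hθ' : P.IsResidueSorting θ') :
    Set.EqOn θ θ' (Set.Icc 1 e) := by
  have hbij := bijOn_natCast_Iio_univ.comp hθ.1
  have hbij' := bijOn_natCast_Iio_univ.comp hθ'.1
  have hcast := eqOn_of_image_eq_of_rel (r := P.ResidueLT) hθ.2 hθ'.2
    (hbij.image_eq.trans hbij'.image_eq.symm)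
  exact fun t ht => bijOn_natCast_Iio_univ.injOn (hθ.1.mapsTo ht) (hθ'.1.mapsTo ht) (hcast ht)

end IsResidueSorting

theorem isResidueSorting_of_realizes {θ : ℕ → ℕ} (hbij : Set.BijOn θ (Set.Icc 1 e) (Set.Iio e))
    (hre : Realizes e P θ) : P.IsResidueSorting θ := by
  refine ⟨hbij, fun s ⟨hs₁, hs₂⟩ t ⟨ht₁, ht₂⟩ hst => ?_⟩
  have hne : (θ s : ZMod e) ≠ θ t := fun h =>
    hst.ne ((bijOn_natCast_Iio_univ.comp hbij).injOn ⟨hs₁, hs₂⟩ ⟨ht₁, ht₂⟩ h)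
  obtain ⟨w, hw⟩ := gammaInt_sub_one_eq_intervalRoot_add_smul hbij.mapsTo hs₁ hst ht₂
  have hmem : intervalRoot e (θ s) (θ t) ∈ {β | β ∈ PhiPos e ∧ ∃ a b : ℕ, ∃ k : ℤ, 1 ≤ a ∧
      a ≤ b ∧ b ≤ e - 1 ∧ β = k • deltaRoot e + gammaInt e θ a b} := by
    refine ⟨intervalRoot_mem hne, s, t - 1, -w, hs₁, by omega, by omega, ?_⟩
    rw [hw, neg_smul]
    abel
  rw [← hre.1] at hmem
  exact ⟨hne, hmem.2⟩

variable (P) in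
theorem exists_isResidueSorting : ∃ θ, P.IsResidueSorting θ := by
  obtain ⟨f, hbij, hmono⟩ := exists_bijOn_Icc_of_rel P.ResidueLT (α := ZMod e)
  rw [ZMod.card] at hbij hmono
  exact ⟨fun t => (f t).val, bijOn_val_univ_Iio.comp hbij,
    fun s hs t ht hst => by simpa using hmono s hs t ht hst⟩

end ConvexPreorderOn

/-- Every convex preorder realizes a unique residue permutation. -/
theorem statement9 (e : ℕ) (he : 1 < e) (P : ConvexPreorderOn e) :
    (∃ θ : ℕ → ℕ, Set.BijOn θ (Set.Icc 1 e) (Set.Iio e) ∧ Realizes e P θ) ∧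
    (∀ θ θ' : ℕ → ℕ, Set.BijOn θ (Set.Icc 1 e) (Set.Iio e) →
      Set.BijOn θ' (Set.Icc 1 e) (Set.Iio e) →
      Realizes e P θ → Realizes e P θ' → Set.EqOn θ θ' (Set.Icc 1 e)) := by
  have : NeZero e := ⟨by omega⟩
  obtain ⟨θ, hθ⟩ := P.exists_isResidueSorting
  refine ⟨⟨θ, hθ.1, hθ.realizes⟩, fun θ θ' hbij hbij' hre hre' => ?_⟩
  exact (ConvexPreorderOn.isResidueSorting_of_realizes hbij hre).eqOn
    (ConvexPreorderOn.isResidueSorting_of_realizes hbij' hre')
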